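/- Let λ be a partition, n ≥ 1, and j an index with λ_j = λ_{j+1}. For every σ ∈ Tab(λ,n), maj(τ_j(σ)) = maj(σ). -/

import Mathlib

open scoped Classical

noncomputable section

namespace MacQuinv

/-- Height of column `j` (0-indexed) of the diagram of `lam`. -/
def colHt (lam : List ℕ) (j : ℕ) : ℕ := lam.getD j 0

/-- The diagram `dg(λ)`: cells `(r, j)` with `1 ≤ r ≤ λ_j` (row `r` counted from the bottom)
and `j` a (0-indexed) column index. -/
def dg (lam : List ℕ) : Finset (ℕ × ℕ) :=
  (Finset.Icc 1 (lam.foldr max 0) ×ˢ Finset.range lam.length).filter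
    fun u => u.1 ≤ colHt lam u.2

abbrev Cell (lam : List ℕ) := {u : ℕ × ℕ // u ∈ dg lam}

/-- A filling of `dg(λ)` with entries in `{1,…,n}` (encoded via `Fin n`: entry = value + 1).
`Tab(λ,n)` is the set of all such fillings. -/
abbrev Filling (lam : List ℕ) (n : ℕ) := Cell lam → Fin n

/-- The entry of `σ` at a cell `u`, an element of `{1,…,n}` for `u ∈ dg(λ)`,
and `0` outside of the diagram. -/
def ent {lam : List ℕ} {n : ℕ} (σ : Filling lam n) (u : ℕ × ℕ) : ℕ :=
  if h : u ∈ dg lam then (σ ⟨u, h⟩ : ℕ) + 1 else 0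

/-- `leg(u)` = number of cells above `u` in its column. -/
def leg (lam : List ℕ) (u : ℕ × ℕ) : ℕ := colHt lam u.2 - u.1

/-- Descents: cells `u` in rows `r ≥ 2` with `σ(u) > σ(South(u))`. -/
def Des {lam : List ℕ} {n : ℕ} (σ : Filling lam n) : Finset (ℕ × ℕ) :=
  (dg lam).filter fun u => 2 ≤ u.1 ∧ ent σ (u.1 - 1, u.2) < ent σ u

def maj {lam : List ℕ} {n : ℕ} (σ : Filling lam n) : ℕ :=
  ∑ u ∈ Des σ, (leg lam u + 1)

/-- The quinv-orientation condition on entries `a` (above `b`), `b`, `c` (same row as `b`,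
to its right): counterclockwise when read in increasing order. -/
def QEnt (a b c : ℕ) : Prop :=
  (a ≤ b ∧ b < c) ∨ (b < c ∧ c < a) ∨ (c < a ∧ a ≤ b)

/-- L-triples of `dg(λ)`, encoded by their two bottom cells `(y, z)`: `y = (r,i)`, `z = (r,j)`
with `i < j`.  The top cell is the cell `(r+1, i)` above `y` when it is in the diagram
(non-degenerate case); when `λ_i = r` the triple is degenerate. -/
def Ltriples (lam : List ℕ) : Finset ((ℕ × ℕ) × (ℕ × ℕ)) :=
  ((dg lam) ×ˢ (dg lam)).filter fun p => p.1.1 = p.2.1 ∧ p.1.2 < p.2.2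

/-- Whether the L-triple with bottom cells `y, z` is a quinv triple of `σ`.  (In the
degenerate case the entry of the missing top cell is `0`, which makes the condition reduce
to `σ(y) < σ(z)`, as required.) -/
def QuinvTriple {lam : List ℕ} {n : ℕ} (σ : Filling lam n) (y z : ℕ × ℕ) : Prop :=
  QEnt (ent σ (y.1 + 1, y.2)) (ent σ y) (ent σ z)

def quinv {lam : List ℕ} {n : ℕ} (σ : Filling lam n) : ℕ :=
  ((Ltriples lam).filter fun p => QuinvTriple σ p.1 p.2).card

/-- The content monomial `x^σ = ∏_{u ∈ dg(λ)} x_{σ(u)}`. -/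
def xmon {lam : List ℕ} {n : ℕ} (R : Type) [CommSemiring R] (σ : Filling lam n) :
    MvPolynomial (Fin n) R :=
  ∏ u : Cell lam, MvPolynomial.X (σ u)


/-- The list of entries of column `j` of `σ`, from bottom (row 1) to top. -/
def columnOf {lam : List ℕ} {n : ℕ} (σ : Filling lam n) (j : ℕ) : List ℕ :=
  (List.range (colHt lam j)).map fun r => ent σ (r + 1, j)

/-- The topmost row at which columns `j` and `j'` of `σ` differ (for columns of equal
height; `0` if the columns agree everywhere). -/
def topDiff {lam : List ℕ} {n : ℕ} (σ : Filling lam n) (j j' : ℕ) : ℕ :=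
  sSup {r : ℕ | r ∈ Finset.Icc 1 (colHt lam j) ∧ ent σ (r, j) ≠ ent σ (r, j')}

/-- The order on (unequal, equal-height) columns: column `jA` is greater than column `jB`
if, at the topmost row `r` where they differ, the cells of `a_{r+1}, a_r, b_r` form a quinv
triple (`a` = entries of column `jA`, `b` = entries of column `jB`; when `r` is the top row,
the entry above is `0` by convention). -/
def ColGT {lam : List ℕ} {n : ℕ} (σ : Filling lam n) (jA jB : ℕ) : Prop :=
  QEnt (ent σ (topDiff σ jA jB + 1, jA)) (ent σ (topDiff σ jA jB, jA))
    (ent σ (topDiff σ jA jB, jB))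

/-- `σ` is quinv-sorted: for any two columns of equal height, the one on the left is not
greater than the one on the right; equivalently for positions `j < j'`, either the two
columns are equal or the column at `j'` is the greater one. -/
def QuinvSorted {lam : List ℕ} {n : ℕ} (σ : Filling lam n) : Prop :=
  ∀ j j' : ℕ, j < j' → j' < lam.length → colHt lam j = colHt lam j' →
    columnOf σ j = columnOf σ j' ∨ ColGT σ j' j

/-- The `t`-integer `[m]_t = 1 + t + ⋯ + t^{m-1}`, in `ℤ[q,t]` realized as
`Polynomial (Polynomial ℤ)` with `t` the outer variable and `q` the inner one. -/
def tInt (m : ℕ) : Polynomial (Polynomial ℤ) :=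
  ∑ i ∈ Finset.range m, Polynomial.X ^ i

/-- The `t`-factorial `[m]_t!`. -/
def tFact : ℕ → Polynomial (Polynomial ℤ)
  | 0 => 1
  | m + 1 => tInt (m + 1) * tFact m

/-- `perm(σ)`: the product over all heights `i` of the `t`-multinomial coefficient
`[m_1 + ⋯ + m_k choose m_1, …, m_k]_t`, where `m_1, …, m_k` are the multiplicities of the
distinct columns among the columns of `σ` of height `i`.  The `t`-multinomial (a polynomial)
is realized as the exact division `[m_1+⋯+m_k]_t! / ([m_1]_t! ⋯ [m_k]_t!)`, computed with
`Polynomial.divByMonic` (the divisor is monic). -/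
def permCoeff {lam : List ℕ} {n : ℕ} (σ : Filling lam n) : Polynomial (Polynomial ℤ) :=
  ∏ i ∈ Finset.Icc 1 (lam.foldr max 0),
    Polynomial.divByMonic
      (tFact ((Finset.range lam.length).filter fun j => colHt lam j = i).card)
      (∏ c ∈ ((Finset.range lam.length).filter fun j => colHt lam j = i).image
          (fun j => columnOf σ j),
        tFact ((Finset.range lam.length).filter
          fun j => colHt lam j = i ∧ columnOf σ j = c).card)


/-- The cell obtained by reflecting a cell of columns `j`, `j+1` into the other column. -/
def mirror (j : ℕ) (u : ℕ × ℕ) : ℕ × ℕ :=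
  if u.2 = j then (u.1, j + 1) else if u.2 = j + 1 then (u.1, j) else u

/-- Whether swapping the entries of row `i` between columns `j` and `j+1` changes the
quinv status of the L-triple on the cells `((i,j), (i-1,j), (i-1,j+1))`. -/
def SwapChanges {lam : List ℕ} {n : ℕ} (σ : Filling lam n) (j i : ℕ) : Prop :=
  ¬ (QEnt (ent σ (i, j)) (ent σ (i - 1, j)) (ent σ (i - 1, j + 1)) ↔
      QEnt (ent σ (i, j + 1)) (ent σ (i - 1, j)) (ent σ (i - 1, j + 1)))

/-- `SwapDown σ j ℓ d` holds iff the iterative swapping of `τ_j`, started at row `ℓ`,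
reaches row `ℓ - d`:  row `ℓ` is swapped, and row `i - 1` is swapped iff row `i` is swapped
and swapping row `i` changes the quinv status of the triple at rows `i, i-1`. -/
def SwapDown {lam : List ℕ} {n : ℕ} (σ : Filling lam n) (j ℓ : ℕ) : ℕ → Prop
  | 0 => True
  | d + 1 => SwapDown σ j ℓ d ∧ SwapChanges σ j (ℓ - d)

/-- Row `r` gets swapped by `τ_j`: columns `j`, `j+1` are not identical, `1 ≤ r ≤ ℓ`
(where `ℓ` is the topmost row where the two columns differ), and the iterative swapping
propagates from row `ℓ` all the way down to row `r`. -/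
def Swapped {lam : List ℕ} {n : ℕ} (σ : Filling lam n) (j : ℕ) (r : ℕ) : Prop :=
  columnOf σ j ≠ columnOf σ (j + 1) ∧ 1 ≤ r ∧ r ≤ topDiff σ j (j + 1) ∧
    SwapDown σ j (topDiff σ j (j + 1)) (topDiff σ j (j + 1) - r)

/-- The operator `τ_j` (for `λ_j = λ_{j+1}`): it exchanges, between columns `j` and `j+1`,
the entries of exactly the rows selected by `Swapped`, and leaves everything else unchanged. -/
def tauj {lam : List ℕ} {n : ℕ} (j : ℕ) (σ : Filling lam n) : Filling lam n :=
  fun u =>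
    if (u.1.2 = j ∨ u.1.2 = j + 1) ∧ Swapped σ j u.1.1 then
      if h : mirror j u.1 ∈ dg lam then σ ⟨mirror j u.1, h⟩ else σ u
    else σ u

/-- The multiset of entries of `σ` in row `r`. -/
def rowMultiset {lam : List ℕ} {n : ℕ} (σ : Filling lam n) (r : ℕ) : Multiset ℕ :=
  ((dg lam).filter fun u => u.1 = r).val.map (ent σ)


/-!
`maj` is a sum of contributions of single cells, and `τ_j` only moves entries within rows of
the two columns `j`, `j+1`, which have equal legs row by row. So it suffices to compare, for
each row `r ≥ 2`, the descents of the two cells `(r, j)`, `(r, j+1)`. If both rows `r` and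
`r - 1` are swapped, or neither is, these descents are merely exchanged or untouched. A swapped
row above an unswapped one is where the swapping stopped, i.e. where the swap does not change
the quinv status of the triple; a case check on `QEnt` shows that then the number of descents
is unchanged. An unswapped row above a swapped one lies above the topmost row where the
columns differ, so its two entries are equal.
-/

lemma mem_dg {lam : List ℕ} {u : ℕ × ℕ} :
    u ∈ dg lam ↔ 1 ≤ u.1 ∧ u.2 < lam.length ∧ u.1 ≤ colHt lam u.2 := by
  have hmax (h : u.2 < lam.length) : colHt lam u.2 ≤ lam.foldr max 0 :=
    List.le_max_of_le' 0 (List.getElem_mem h) (by rw [colHt, List.getD_eq_getElem _ _ h])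
  simp only [dg, Finset.mem_filter, Finset.mem_product, Finset.mem_Icc, Finset.mem_range]
  constructor
  · rintro ⟨⟨⟨h1, -⟩, h2⟩, h3⟩
    exact ⟨h1, h2, h3⟩
  · rintro ⟨h1, h2, h3⟩
    exact ⟨⟨⟨h1, h3.trans (hmax h2)⟩, h2⟩, h3⟩

lemma sum_eq_sum_of_eq_off_pair {ι M : Type*} [AddCommMonoid M] {s : Finset ι} {f g : ι → M}
    {a b : ι} (hab : a ≠ b) (ha : a ∈ s) (hb : b ∈ s)
    (hoff : ∀ c ∈ s, c ≠ a → c ≠ b → f c = g c) (hpair : f a + f b = g a + g b) :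
    ∑ c ∈ s, f c = ∑ c ∈ s, g c := by
  have hsub : {a, b} ⊆ s := Finset.insert_subset ha (Finset.singleton_subset_iff.mpr hb)
  rw [← Finset.sum_sdiff hsub, ← Finset.sum_sdiff hsub (f := g), Finset.sum_pair hab,
    Finset.sum_pair hab, hpair]
  congr 1
  refine Finset.sum_congr rfl fun c hc => ?_
  simp only [Finset.mem_sdiff, Finset.mem_insert, Finset.mem_singleton, not_or] at hc
  exact hoff c hc.1 hc.2.1 hc.2.2

lemma descents_eq_of_qEnt_iff {a a' b c : ℕ} (w : ℕ) (h : QEnt a b c ↔ QEnt a' b c) :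
    (if b < a' then w else 0) + (if c < a then w else 0) =
      (if b < a then w else 0) + (if c < a' then w else 0) := by
  unfold QEnt at h
  split_ifs <;> omega

section Tauj

variable {lam : List ℕ} {n j : ℕ}

lemma SwapDown.mono {σ : Filling lam n} {ℓ d d' : ℕ} (h : SwapDown σ j ℓ d) (hd : d' ≤ d) :
    SwapDown σ j ℓ d' := by
  induction d with
  | zero => rwa [Nat.le_zero.mp hd]
  | succ d ih =>
    rcases Nat.le_succ_iff.mp hd with hd | rfl
    · exact ih h.1 hd
    · exact h

lemma Swapped.of_le {σ : Filling lam n} {r r' : ℕ} (h : Swapped σ j r) (hr : r ≤ r')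
    (hr' : r' ≤ topDiff σ j (j + 1)) : Swapped σ j r' :=
  ⟨h.1, h.2.1.trans hr, hr', h.2.2.2.mono (by omega)⟩

lemma Swapped.not_swapChanges {σ : Filling lam n} {r : ℕ} (h : Swapped σ j r) (hr : 2 ≤ r)
    (hbelow : ¬ Swapped σ j (r - 1)) : ¬ SwapChanges σ j r := by
  intro hchange
  obtain ⟨hne, -, hle, hdown⟩ := h
  refine hbelow ⟨hne, by omega, by omega, ?_⟩
  rw [show topDiff σ j (j + 1) - (r - 1) = topDiff σ j (j + 1) - r + 1 by omega]
  exact ⟨hdown, by rwa [show topDiff σ j (j + 1) - (topDiff σ j (j + 1) - r) = r by omega]⟩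

lemma ent_eq_of_topDiff_lt (hcol : colHt lam j = colHt lam (j + 1)) (σ : Filling lam n)
    {r : ℕ} (hr : topDiff σ j (j + 1) < r) : ent σ (r, j) = ent σ (r, j + 1) := by
  by_cases hle : r ≤ colHt lam j
  · by_contra hne
    have hbdd : BddAbove
        {s : ℕ | s ∈ Finset.Icc 1 (colHt lam j) ∧ ent σ (s, j) ≠ ent σ (s, j + 1)} :=
      ⟨colHt lam j, fun s hs => (Finset.mem_Icc.mp hs.1).2⟩
    exact not_le.mpr hr (le_csSup hbdd ⟨Finset.mem_Icc.mpr ⟨by omega, hle⟩, hne⟩)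
  · have h1 : (r, j) ∉ dg lam := fun h => hle (mem_dg.mp h).2.2
    have h2 : (r, j + 1) ∉ dg lam := fun h => hle (hcol ▸ (mem_dg.mp h).2.2)
    simp [ent, h1, h2]

lemma mirror_mem_dg_iff (hj : j + 1 < lam.length) (hcol : colHt lam j = colHt lam (j + 1))
    {u : ℕ × ℕ} (hu : u.2 = j ∨ u.2 = j + 1) : mirror j u ∈ dg lam ↔ u ∈ dg lam := by
  obtain ⟨r, c⟩ := u
  rcases hu with rfl | rfl <;> simp [mirror, mem_dg, hcol] <;> omega

lemma ent_tauj (hj : j + 1 < lam.length) (hcol : colHt lam j = colHt lam (j + 1))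
    (σ : Filling lam n) (u : ℕ × ℕ) :
    ent (tauj j σ) u =
      if (u.2 = j ∨ u.2 = j + 1) ∧ Swapped σ j u.1 then ent σ (mirror j u) else ent σ u := by
  by_cases hu : u ∈ dg lam
  · by_cases h : (u.2 = j ∨ u.2 = j + 1) ∧ Swapped σ j u.1
    · have hm := (mirror_mem_dg_iff hj hcol h.1).mpr hu
      simp [ent, tauj, hu, hm, h]
    · simp [ent, tauj, hu, h]
  · by_cases h : (u.2 = j ∨ u.2 = j + 1) ∧ Swapped σ j u.1
    · have hm := (mirror_mem_dg_iff hj hcol h.1).not.mpr hu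
      simp [ent, hu, hm, h]
    · simp [ent, hu, h]

lemma ent_tauj_of_ne (σ : Filling lam n) {u : ℕ × ℕ} (h1 : u.2 ≠ j) (h2 : u.2 ≠ j + 1) :
    ent (tauj j σ) u = ent σ u := by
  by_cases hu : u ∈ dg lam
  · simp [ent, tauj, hu, h1, h2]
  · simp [ent, hu]

/-- The contribution of the cell `u` to `maj`, provided `u` lies in a row `≥ 2`. -/
def descentWeight (σ : Filling lam n) (u : ℕ × ℕ) : ℕ :=
  if ent σ (u.1 - 1, u.2) < ent σ u then leg lam u + 1 else 0

def columnMaj (σ : Filling lam n) (c : ℕ) : ℕ :=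
  ∑ r ∈ Finset.Icc 2 (colHt lam c), descentWeight σ (r, c)

lemma maj_eq_sum_columnMaj (σ : Filling lam n) :
    maj σ = ∑ c ∈ Finset.range lam.length, columnMaj σ c := by
  have hDes : Des σ = ((dg lam).filter fun u => 2 ≤ u.1).filter
      fun u => ent σ (u.1 - 1, u.2) < ent σ u := by
    rw [Des, Finset.filter_filter]
  rw [maj, hDes, Finset.sum_filter]
  refine Finset.sum_finset_product_right _ _ _ fun u => ?_
  simp only [Finset.mem_filter, mem_dg, Finset.mem_range, Finset.mem_Icc]
  omega

lemma columnMaj_tauj_of_ne (σ : Filling lam n) {c : ℕ} (h1 : c ≠ j) (h2 : c ≠ j + 1) :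
    columnMaj (tauj j σ) c = columnMaj σ c := by
  simp [columnMaj, descentWeight, ent_tauj_of_ne, h1, h2]

lemma descentWeight_tauj_add (hj : j + 1 < lam.length) (hcol : colHt lam j = colHt lam (j + 1))
    (σ : Filling lam n) {r : ℕ} (hr : 2 ≤ r) :
    descentWeight (tauj j σ) (r, j) + descentWeight (tauj j σ) (r, j + 1) =
      descentWeight σ (r, j) + descentWeight σ (r, j + 1) := by
  have hleg : leg lam (r, j + 1) = leg lam (r, j) := by simp [leg, hcol]
  simp only [descentWeight, ent_tauj hj hcol, mirror, hleg]
  by_cases hup : Swapped σ j r <;> by_cases hlow : Swapped σ j (r - 1)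
  · simp [hup, hlow, add_comm]
  · have hsame := not_not.mp (hup.not_swapChanges hr hlow)
    simpa [hup, hlow] using descents_eq_of_qEnt_iff (leg lam (r, j) + 1) hsame
  · have hgt : topDiff σ j (j + 1) < r := by
      by_contra hle
      exact hup (hlow.of_le (by omega) (not_lt.mp hle))
    simp [hup, hlow, ent_eq_of_topDiff_lt hcol σ hgt, add_comm]
  · simp [hup, hlow]

lemma columnMaj_tauj_add (hj : j + 1 < lam.length) (hcol : colHt lam j = colHt lam (j + 1))
    (σ : Filling lam n) :
    columnMaj (tauj j σ) j + columnMaj (tauj j σ) (j + 1) =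
      columnMaj σ j + columnMaj σ (j + 1) := by
  simp only [columnMaj, ← hcol, ← Finset.sum_add_distrib]
  exact Finset.sum_congr rfl fun r hr =>
    descentWeight_tauj_add hj hcol σ (Finset.mem_Icc.mp hr).1

end Tauj

theorem tauj_preserves_maj_general
    (lam : List ℕ) (n : ℕ) (j : ℕ) (hj : j + 1 < lam.length)
    (hcol : colHt lam j = colHt lam (j + 1)) (σ : Filling lam n) :
    maj (tauj j σ) = maj σ := by
  rw [maj_eq_sum_columnMaj, maj_eq_sum_columnMaj]
  exact sum_eq_sum_of_eq_off_pair (by omega) (Finset.mem_range.mpr (by omega))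
    (Finset.mem_range.mpr hj)
    (fun c _ h1 h2 => columnMaj_tauj_of_ne σ h1 h2) (columnMaj_tauj_add hj hcol σ)

/-- for `λ_j = λ_{j+1}`, the operator `τ_j` preserves the major index. -/
theorem tauj_preserves_maj
    (lam : List ℕ) (hdec : lam.Pairwise (· ≥ ·)) (hpos : ∀ m ∈ lam, 0 < m)
    (n : ℕ) (hn : 1 ≤ n) (j : ℕ) (hj : j + 1 < lam.length)
    (hcol : colHt lam j = colHt lam (j + 1)) (σ : Filling lam n) :
    maj (tauj j σ) = maj σ :=
  tauj_preserves_maj_general lam n j hj hcol σ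

end MacQuinv
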